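/- arXiv:2405.12911 — 2 statements merged into one kernel-verified Lean document; each statement's English description precedes it below -/
import Mathlib

section
/- Let ψ be a conformal immersion of a surface into ℝ³ with x_ξ² + y_ξ² + z_ξ² = 0 and write −2i ψ_ξ ∧ ψ_{ξ̄} = (η₁, η₂, η₃). Let ψ* be its Calabi partner given by x*_ξ = −i e^φ y_ξ, y*_ξ = i e^φ x_ξ, z*_ξ = e^φ z_ξ. Then the vector V = (η₁, η₂, E), where E = 2(|x_ξ|²+|y_ξ|²+|z_ξ|²), is Lorentz-orthogonal to ψ*_ξ and ψ*_{ξ̄}, and ⟨⟨V, V⟩⟩ = −η₃². In particular, when η₃ ≠ 0, N* = (η₁, η₂, E)/η₃ is a timelike unit normal to ψ*. -/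
noncomputable def wd (f : ℂ → ℂ) (ξ : ℂ) : ℂ :=
  (fderiv ℝ f ξ 1 - Complex.I * fderiv ℝ f ξ Complex.I) / 2

noncomputable def wdb (f : ℂ → ℂ) (ξ : ℂ) : ℂ :=
  (fderiv ℝ f ξ 1 + Complex.I * fderiv ℝ f ξ Complex.I) / 2

def cf (x : ℂ → ℝ) : ℂ → ℂ := fun ζ => (x ζ : ℂ)

/-- Complex-bilinear Minkowski product on triples. -/
def dotM (a b : ℂ × ℂ × ℂ) : ℂ := a.1 * b.1 + a.2.1 * b.2.1 - a.2.2 * b.2.2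

/-- Complex-bilinear Euclidean cross product on triples. -/
def crossE (a b : ℂ × ℂ × ℂ) : ℂ × ℂ × ℂ :=
  (a.2.1 * b.2.2 - a.2.2 * b.2.1, a.2.2 * b.1 - a.1 * b.2.2, a.1 * b.2.1 - a.2.1 * b.1)

lemma im_fderiv_cf (f : ℂ → ℝ) (ξ v : ℂ) : (fderiv ℝ (cf f) ξ v).im = 0 := by
  by_cases h : DifferentiableAt ℝ (cf f) ξ
  · have hf : DifferentiableAt ℝ f ξ := by
      have : f = fun ζ => (cf f ζ).re := by funext ζ; simp [cf]
      rw [this]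
      exact Complex.reCLM.differentiableAt.comp ξ h
    have hcomp : cf f = Complex.ofRealCLM ∘ f := rfl
    rw [hcomp, fderiv_comp (x := ξ) Complex.ofRealCLM.differentiableAt hf]
    simp
  · rw [fderiv_zero_of_not_differentiableAt h]; simp

lemma wdb_eq_conj (f : ℂ → ℝ) (ξ : ℂ) :
    wdb (cf f) ξ = starRingEnd ℂ (wd (cf f) ξ) := by
  have h1 := im_fderiv_cf f ξ 1
  have h2 := im_fderiv_cf f ξ Complex.I
  unfold wd wdb
  rw [map_div₀, map_sub, map_mul, Complex.conj_I,
    Complex.conj_eq_iff_im.mpr h1, Complex.conj_eq_iff_im.mpr h2, map_ofNat]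
  ring

/-- The vector `V = (η₁, η₂, E)` is Lorentz-orthogonal to `ψ*_ξ`, `ψ*_ξ̄`, and
`⟨⟨V,V⟩⟩ = -η₃²`; when `η₃ ≠ 0`, `N* = V/η₃` is a timelike unit normal of `ψ*`. -/

theorem stmt_3 (U : Set ℂ) (hU : IsOpen U)
    (x y z xs ys zs : ℂ → ℝ) (φ : ℝ → ℝ)
    (hconf : ∀ ξ ∈ U, (wd (cf x) ξ) ^ 2 + (wd (cf y) ξ) ^ 2 + (wd (cf z) ξ) ^ 2 = 0)
    (hxs : ∀ ξ ∈ U, wd (cf xs) ξ =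
      -Complex.I * (Complex.ofReal (Real.exp (φ (z ξ)))) * wd (cf y) ξ)
    (hys : ∀ ξ ∈ U, wd (cf ys) ξ =
      Complex.I * (Complex.ofReal (Real.exp (φ (z ξ)))) * wd (cf x) ξ)
    (hzs : ∀ ξ ∈ U, wd (cf zs) ξ =
      (Complex.ofReal (Real.exp (φ (z ξ)))) * wd (cf z) ξ) :
    ∀ ξ ∈ U,
      let ψξ : ℂ × ℂ × ℂ := (wd (cf x) ξ, wd (cf y) ξ, wd (cf z) ξ)
      let ψξb : ℂ × ℂ × ℂ := (wdb (cf x) ξ, wdb (cf y) ξ, wdb (cf z) ξ)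
      let ψsξ : ℂ × ℂ × ℂ := (wd (cf xs) ξ, wd (cf ys) ξ, wd (cf zs) ξ)
      let ψsξb : ℂ × ℂ × ℂ := (wdb (cf xs) ξ, wdb (cf ys) ξ, wdb (cf zs) ξ)
      let η₁ : ℂ := -2 * Complex.I * (crossE ψξ ψξb).1
      let η₂ : ℂ := -2 * Complex.I * (crossE ψξ ψξb).2.1
      let η₃ : ℂ := -2 * Complex.I * (crossE ψξ ψξb).2.2
      let E : ℂ := Complex.ofReal (2 * (Complex.normSq (wd (cf x) ξ) +
        Complex.normSq (wd (cf y) ξ) + Complex.normSq (wd (cf z) ξ)))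
      let V : ℂ × ℂ × ℂ := (η₁, η₂, E)
      dotM ψsξ V = 0 ∧ dotM ψsξb V = 0 ∧ dotM V V = -η₃ ^ 2 ∧
      (η₃ ≠ 0 →
        let Nstar : ℂ × ℂ × ℂ := (η₁ / η₃, η₂ / η₃, E / η₃)
        dotM Nstar Nstar = -1 ∧ dotM ψsξ Nstar = 0 ∧ dotM ψsξb Nstar = 0) := by
  intro ξ hξ
  have hconf := hconf ξ hξ
  have hxs := hxs ξ hξ
  have hys := hys ξ hξ
  have hzs := hzs ξ hξ
  set a := wd (cf x) ξ with ha
  set b := wd (cf y) ξ with hb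
  set c := wd (cf z) ξ with hc
  set e : ℂ := (Real.exp (φ (z ξ)) : ℂ) with he
  set A := starRingEnd ℂ a with hA
  set B := starRingEnd ℂ b with hB
  set C := starRingEnd ℂ c with hC
  have hce : starRingEnd ℂ e = e := by rw [he]; exact Complex.conj_ofReal _
  have hwx : wdb (cf x) ξ = A := wdb_eq_conj x ξ
  have hwy : wdb (cf y) ξ = B := wdb_eq_conj y ξ
  have hwz : wdb (cf z) ξ = C := wdb_eq_conj z ξ
  have hwxs : wdb (cf xs) ξ = Complex.I * e * B := by
    rw [wdb_eq_conj, hxs, map_mul, map_mul, map_neg, Complex.conj_I, hce, ← hB]; ring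
  have hwys : wdb (cf ys) ξ = -Complex.I * e * A := by
    rw [wdb_eq_conj, hys, map_mul, map_mul, Complex.conj_I, hce, ← hA]
  have hwzs : wdb (cf zs) ξ = e * C := by
    rw [wdb_eq_conj, hzs, map_mul, hce, ← hC]
  have hconfb : A ^ 2 + B ^ 2 + C ^ 2 = 0 := by
    have := congrArg (starRingEnd ℂ) hconf
    simpa [hA, hB, hC] using this
  have hE : (Complex.ofReal (2 * (Complex.normSq a + Complex.normSq b +
      Complex.normSq c)) : ℂ) = 2 * (a * A + b * B + c * C) := by
    rw [hA, hB, hC]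
    push_cast [← Complex.mul_conj]
    ring
  intro ψξ ψξb ψsξ ψsξb η₁ η₂ η₃ E V
  have hη₁ : η₁ = -2 * Complex.I * (b * C - c * B) := by
    simp only [η₁, ψξ, ψξb, crossE, hwy, hwz]
  have hη₂ : η₂ = -2 * Complex.I * (c * A - a * C) := by
    simp only [η₂, ψξ, ψξb, crossE, hwx, hwz]
  have hη₃ : η₃ = -2 * Complex.I * (a * B - b * A) := by
    simp only [η₃, ψξ, ψξb, crossE, hwx, hwy]
  have hEV : E = 2 * (a * A + b * B + c * C) := hE
  have key1 : dotM ψsξ V = 0 := by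
    simp only [dotM, V, ψsξ, hxs, hys, hzs, hη₁, hη₂, hEV]
    linear_combination (-2 * e * C) * hconf + (2 * e * (b ^ 2 * C + a ^ 2 * C - b * c * B - a * c * A)) * Complex.I_sq
  have key2 : dotM ψsξb V = 0 := by
    simp only [dotM, V, ψsξb, hwxs, hwys, hwzs, hη₁, hη₂, hEV]
    linear_combination (-2 * e * c) * hconfb + (2 * e * (c * B ^ 2 + c * A ^ 2 - b * B * C - a * A * C)) * Complex.I_sq
  have key3 : dotM V V = -η₃ ^ 2 := by
    simp only [dotM, V, hη₁, hη₂, hη₃, hEV]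
    linear_combination (-4 * (A ^ 2 + B ^ 2 + C ^ 2)) * hconf + (4 * ((b * C - c * B) ^ 2 + (c * A - a * C) ^ 2 + (a * B - b * A) ^ 2)) * Complex.I_sq
  refine ⟨key1, key2, key3, fun hη ↦ ?_⟩
  intro Nstar
  have k1 : ψsξ.1 * η₁ + ψsξ.2.1 * η₂ - ψsξ.2.2 * E = 0 := key1
  have k2 : ψsξb.1 * η₁ + ψsξb.2.1 * η₂ - ψsξb.2.2 * E = 0 := key2
  have k3 : η₁ * η₁ + η₂ * η₂ - E * E = -η₃ ^ 2 := key3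
  refine ⟨?_, ?_, ?_⟩
  · show η₁ / η₃ * (η₁ / η₃) + η₂ / η₃ * (η₂ / η₃) - E / η₃ * (E / η₃) = -1
    field_simp
    linear_combination k3
  · show ψsξ.1 * (η₁ / η₃) + ψsξ.2.1 * (η₂ / η₃) - ψsξ.2.2 * (E / η₃) = 0
    field_simp
    linear_combination k1
  · show ψsξb.1 * (η₁ / η₃) + ψsξb.2.1 * (η₂ / η₃) - ψsξb.2.2 * (E / η₃) = 0
    field_simp
    linear_combination k2
end

section
/- Let ψ : Σ → ℝ³ be a conformal [φ, e₃]-minimal immersion with unit normal N and angle function η = ⟨N, e₃⟩, and ψ* its Calabi partner. Then −2i ψ*_ξ ∧ ψ*_{ξ̄} = −e^{2φ} E η (N₁, N₂, −1), where N = (N₁, N₂, N₃) and E is the conformal factor of ψ. Consequently ψ* is a frontal in ℝ³ with unit normal ν = (N − (1+η)e₃)/√(2−η²), and its singular set is {η = 0}. -/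
def dotE (a b : ℂ × ℂ × ℂ) : ℂ := a.1 * b.1 + a.2.1 * b.2.1 + a.2.2 * b.2.2

def dot3 (a b : ℝ × ℝ × ℝ) : ℝ := a.1 * b.1 + a.2.1 * b.2.1 + a.2.2 * b.2.2

def c3 (v : ℝ × ℝ × ℝ) : ℂ × ℂ × ℂ := ((v.1 : ℂ), (v.2.1 : ℂ), (v.2.2 : ℂ))


lemma fderiv_cf_im (x : ℂ → ℝ) (ξ v : ℂ) : (fderiv ℝ (cf x) ξ v).im = 0 := by
  by_cases h : DifferentiableAt ℝ x ξ
  · have h1 : HasFDerivAt (cf x) (Complex.ofRealCLM.comp (fderiv ℝ x ξ)) ξ :=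
      Complex.ofRealCLM.hasFDerivAt.comp ξ h.hasFDerivAt
    rw [h1.fderiv]; simp
  · have h2 : ¬ DifferentiableAt ℝ (cf x) ξ := fun hc =>
      h ((Complex.reCLM.differentiableAt).comp ξ hc : DifferentiableAt ℝ (fun ζ => (cf x ζ).re) ξ)
    rw [fderiv_zero_of_not_differentiableAt h2]; simp

lemma wdb_conj (x : ℂ → ℝ) (ξ : ℂ) : wdb (cf x) ξ = starRingEnd ℂ (wd (cf x) ξ) := by
  have hp : starRingEnd ℂ (fderiv ℝ (cf x) ξ 1) = fderiv ℝ (cf x) ξ 1 :=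
    Complex.conj_eq_iff_im.2 (fderiv_cf_im x ξ 1)
  have hq : starRingEnd ℂ (fderiv ℝ (cf x) ξ Complex.I) = fderiv ℝ (cf x) ξ Complex.I :=
    Complex.conj_eq_iff_im.2 (fderiv_cf_im x ξ Complex.I)
  unfold wd wdb
  rw [map_div₀, map_sub, map_mul, Complex.conj_I, hp, hq]
  ring_nf
  simp [Complex.conj_ofNat]

set_option maxHeartbeats 1600000 in
/-- Theorem 4.3: the Calabi partner `ψ*` of a conformal `[φ,e₃]`-minimal immersion
satisfies `-2i ψ*_ξ ∧ ψ*_ξ̄ = -e^{2φ} E η (N₁, N₂, -1)`; consequently `ψ*` is a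
frontal with unit normal `ν = (N - (1+η)e₃)/√(2-η²)` and singular set `{η = 0}`. -/
theorem stmt_10 (U : Set ℂ) (hU : IsOpen U)
    (x y z xs ys zs : ℂ → ℝ) (φ : ℝ → ℝ)
    (hφ : ContDiff ℝ (⊤ : ℕ∞) φ)
    (hconf : ∀ ξ ∈ U, (wd (cf x) ξ) ^ 2 + (wd (cf y) ξ) ^ 2 + (wd (cf z) ξ) ^ 2 = 0)
    (himm : ∀ ξ ∈ U, 0 < Complex.normSq (wd (cf x) ξ) + Complex.normSq (wd (cf y) ξ) +
      Complex.normSq (wd (cf z) ξ))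
    (hsys1 : ∀ ξ ∈ U, 2 * wdb (wd (cf x)) ξ +
      Complex.ofReal (deriv φ (z ξ)) * (wd (cf z) ξ * wdb (cf x) ξ + wdb (cf z) ξ * wd (cf x) ξ) = 0)
    (hsys2 : ∀ ξ ∈ U, 2 * wdb (wd (cf y)) ξ +
      Complex.ofReal (deriv φ (z ξ)) * (wd (cf z) ξ * wdb (cf y) ξ + wdb (cf z) ξ * wd (cf y) ξ) = 0)
    (hsys3 : ∀ ξ ∈ U, 2 * wdb (wd (cf z)) ξ -
      Complex.ofReal (deriv φ (z ξ)) * (Complex.ofReal (Complex.normSq (wd (cf x) ξ)) +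
        Complex.ofReal (Complex.normSq (wd (cf y) ξ)) -
        Complex.ofReal (Complex.normSq (wd (cf z) ξ))) = 0)
    (hxs : ∀ ξ ∈ U, wd (cf xs) ξ =
      -Complex.I * Complex.ofReal (Real.exp (φ (z ξ))) * wd (cf y) ξ)
    (hys : ∀ ξ ∈ U, wd (cf ys) ξ =
      Complex.I * Complex.ofReal (Real.exp (φ (z ξ))) * wd (cf x) ξ)
    (hzs : ∀ ξ ∈ U, wd (cf zs) ξ =
      Complex.ofReal (Real.exp (φ (z ξ))) * wd (cf z) ξ) :
    ∀ ξ ∈ U,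
      let ψξ : ℂ × ℂ × ℂ := (wd (cf x) ξ, wd (cf y) ξ, wd (cf z) ξ)
      let ψξb : ℂ × ℂ × ℂ := (wdb (cf x) ξ, wdb (cf y) ξ, wdb (cf z) ξ)
      let ψsξ : ℂ × ℂ × ℂ := (wd (cf xs) ξ, wd (cf ys) ξ, wd (cf zs) ξ)
      let ψsξb : ℂ × ℂ × ℂ := (wdb (cf xs) ξ, wdb (cf ys) ξ, wdb (cf zs) ξ)
      let E : ℝ := 2 * (Complex.normSq (wd (cf x) ξ) + Complex.normSq (wd (cf y) ξ) +
        Complex.normSq (wd (cf z) ξ))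
      let N₁ : ℝ := (-2 * Complex.I * (crossE ψξ ψξb).1).re / E
      let N₂ : ℝ := (-2 * Complex.I * (crossE ψξ ψξb).2.1).re / E
      let η : ℝ := (-2 * Complex.I * (crossE ψξ ψξb).2.2).re / E
      let ν : ℝ × ℝ × ℝ := (Real.sqrt (2 - η ^ 2))⁻¹ •
        ((N₁, N₂, η) - (0, 0, 1 + η))
      ((-2 * Complex.I) • crossE ψsξ ψsξb =
        (-(Complex.ofReal (Real.exp (2 * φ (z ξ)) * E * η))) • c3 (N₁, N₂, -1)) ∧
      dot3 ν ν = 1 ∧ dotE (c3 ν) ψsξ = 0 ∧ dotE (c3 ν) ψsξb = 0 ∧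
      (crossE ψsξ ψsξb = 0 ↔ η = 0) := by

  intro ξ hξ
  have hxs' := hxs ξ hξ
  have hys' := hys ξ hξ
  have hzs' := hzs ξ hξ
  have himm' := himm ξ hξ
  have hconf' := hconf ξ hξ
  simp only [wdb_conj, hxs', hys', hzs', crossE, c3, dotE, dot3, map_mul, map_neg,
    Complex.conj_I, Complex.conj_ofReal, Prod.smul_mk, Prod.mk_sub_mk, smul_eq_mul,
    Prod.mk.injEq, Prod.mk_eq_zero]
  set a := wd (cf x) ξ with ha
  set b := wd (cf y) ξ with hb
  set c := wd (cf z) ξ with hc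
  set A := (starRingEnd ℂ) a with hA
  set B := (starRingEnd ℂ) b with hB
  set C := (starRingEnd ℂ) c with hC
  set r := Real.exp (φ (z ξ)) with hrdef
  have hr0 : (0:ℝ) < r := Real.exp_pos _
  have hrC : (r:ℂ) ≠ 0 := by exact_mod_cast hr0.ne'
  set S : ℝ := Complex.normSq a + Complex.normSq b + Complex.normSq c with hSdef
  have hS0 : (0:ℝ) < S := himm'
  have hSne : S ≠ 0 := hS0.ne'
  have hSCne : (S:ℂ) ≠ 0 := by exact_mod_cast hSne
  have hSC : ((S:ℝ):ℂ) = a*A + b*B + c*C := by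
    rw [hA, hB, hC, Complex.mul_conj, Complex.mul_conj, Complex.mul_conj, hSdef]
    push_cast
    ring
  have hconfb : A^2 + B^2 + C^2 = 0 := by
    rw [hA, hB, hC]
    have := congrArg (starRingEnd ℂ) hconf'
    simpa only [map_add, map_pow, map_zero] using this
  have id1 : (a*C + A*c) * (a*A + b*B + c*C) = (a*B - A*b) * (b*C - B*c) := by
    linear_combination (a*c) * hconfb + (A*C) * hconf'
  have id2 : (b*C + B*c) * (a*A + b*B + c*C) = (a*B - A*b) * (c*A - C*a) := by
    linear_combination (b*c) * hconfb + (B*C) * hconf'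
  set n1 : ℝ := (-2 * Complex.I * (b * C - c * B)).re with hn1def
  set n2 : ℝ := (-2 * Complex.I * (c * A - a * C)).re with hn2def
  set n3 : ℝ := (-2 * Complex.I * (a * B - b * A)).re with hn3def
  have hRn1 : ((n1:ℝ):ℂ) = -2 * Complex.I * (b * C - c * B) := by
    rw [hn1def]
    refine Complex.conj_eq_iff_re.1 ?_
    simp only [map_mul, map_sub, map_neg, map_ofNat, Complex.conj_I, hA, hB, hC,
      Complex.conj_conj]
    ring
  have hRn2 : ((n2:ℝ):ℂ) = -2 * Complex.I * (c * A - a * C) := by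
    rw [hn2def]
    refine Complex.conj_eq_iff_re.1 ?_
    simp only [map_mul, map_sub, map_neg, map_ofNat, Complex.conj_I, hA, hB, hC,
      Complex.conj_conj]
    ring
  have hRn3 : ((n3:ℝ):ℂ) = -2 * Complex.I * (a * B - b * A) := by
    rw [hn3def]
    refine Complex.conj_eq_iff_re.1 ?_
    simp only [map_mul, map_sub, map_neg, map_ofNat, Complex.conj_I, hA, hB, hC,
      Complex.conj_conj]
    ring
  have idunit : ((n1:ℝ):ℂ)^2 + ((n2:ℝ):ℂ)^2 + ((n3:ℝ):ℂ)^2 = (2*(S:ℂ))^2 := by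
    rw [hRn1, hRn2, hRn3]
    linear_combination (-4*(A^2+B^2+C^2))*hconf' + (-(2*(S:ℂ)+2*(a*A+b*B+c*C)))*(2*hSC)
      + (4*((b*C-c*B)^2+(c*A-a*C)^2+(a*B-b*A)^2))*Complex.I_sq
  have hsum : n1^2 + n2^2 + n3^2 = (2*S)^2 := by exact_mod_cast idunit
  have hexp : Real.exp (2 * φ (z ξ)) = r * r := by rw [two_mul, Real.exp_add]
  have hle : n3^2 ≤ (2*S)^2 := by nlinarith [sq_nonneg n1, sq_nonneg n2]
  have h4 : (0:ℝ) < (2*S)^2 := by positivity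
  have h2pos : (0:ℝ) < 2 - (n3/(2*S))^2 := by
    rw [div_pow, sub_pos]
    calc n3^2/(2*S)^2 ≤ 1 := by rw [div_le_one h4]; exact hle
      _ < 2 := one_lt_two
  set s := Real.sqrt (2 - (n3/(2*S))^2) with hsdef
  have hs2 : s^2 = 2 - (n3/(2*S))^2 := Real.sq_sqrt h2pos.le
  have hs0 : s ≠ 0 := (Real.sqrt_pos.2 h2pos).ne'
  have hsCne : ((s:ℝ):ℂ) ≠ 0 := by exact_mod_cast hs0
  have hs2' : s^2*(2*S)^2 = 2*(2*S)^2 - n3^2 := by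
    rw [hs2]; field_simp
  refine ⟨⟨?_, ?_, ?_⟩, ?_, ?_, ?_, ?_⟩
  · rw [hexp]
    push_cast
    rw [hRn1, hRn3]
    field_simp
    linear_combination -id1 - (a*C+c*A)*hSC
  · rw [hexp]
    push_cast
    rw [hRn2, hRn3]
    field_simp
    linear_combination -id2 - (b*C+c*B)*hSC
  · rw [hexp]
    push_cast
    rw [hRn3]
    field_simp
    linear_combination (a*B-b*A)*Complex.I_sq
  · field_simp
    linear_combination hsum - hs2'
  · push_cast
    rw [hRn1, hRn2, hRn3]
    field_simp
    linear_combination ((r:ℂ)*(b*(b*C-c*B) - a*(c*A-C*a)))*Complex.I_sq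
      - ((r:ℂ)*C)*hconf' - ((r:ℂ)*c)*hSC
  · push_cast
    rw [hRn1, hRn2, hRn3]
    field_simp
    linear_combination ((r:ℂ)*(A*(c*A-C*a) - B*(b*C-c*B)))*Complex.I_sq
      - ((r:ℂ)*c)*hconfb - ((r:ℂ)*C)*hSC
  · have h2Sne : (2*S:ℝ) ≠ 0 := by positivity
    have hI2ne : (-2*Complex.I : ℂ) ≠ 0 := by simp [Complex.I_ne_zero]
    constructor
    · rintro ⟨h1, h2, h3⟩
      have key3 : ((r:ℂ))^2*(a*B - b*A) = 0 := by
        linear_combination h3 + ((r:ℂ)^2*(a*B - b*A))*Complex.I_sq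
      have hab : a*B - b*A = 0 := by
        rcases mul_eq_zero.1 key3 with h | h
        · exact absurd h (pow_ne_zero 2 hrC)
        · exact h
      have hcast : ((n3:ℝ):ℂ) = 0 := by rw [hRn3]; linear_combination (-2*Complex.I)*hab
      have hn3z : n3 = 0 := by exact_mod_cast hcast
      rw [hn3z, zero_div]
    · intro h0
      have hn3z : n3 = 0 := by
        rcases div_eq_zero_iff.1 h0 with h | h
        · exact h
        · exact absurd h h2Sne
      have h' : (-2*Complex.I)*(a*B - b*A) = 0 := by
        have hc := hRn3
        rw [hn3z] at hc
        push_cast at hc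
        linear_combination -hc
      have hab : a*B - b*A = 0 := by
        rcases mul_eq_zero.1 h' with h | h
        · exact absurd h hI2ne
        · exact h
      have hSsum : a*A + b*B + c*C ≠ 0 := by rw [← hSC]; exact hSCne
      have h1 : a*C + A*c = 0 := by
        have hz : (a*C + A*c)*(a*A + b*B + c*C) = 0 := by
          rw [id1]; linear_combination (b*C - B*c)*hab
        rcases mul_eq_zero.1 hz with h | h
        · exact h
        · exact absurd h hSsum
      have h2 : b*C + B*c = 0 := by
        have hz : (b*C + B*c)*(a*A + b*B + c*C) = 0 := by
          rw [id2]; linear_combination (c*A - C*a)*hab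
        rcases mul_eq_zero.1 hz with h | h
        · exact h
        · exact absurd h hSsum
      refine ⟨?_, ?_, ?_⟩
      · linear_combination (Complex.I*(r:ℂ)^2)*h1
      · linear_combination (Complex.I*(r:ℂ)^2)*h2
      · linear_combination (-Complex.I^2*(r:ℂ)^2)*hab
end
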